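/- Let V be a non-singular orthogonal geometry over a field F of characteristic ≠ 2. Every element x of the Clifford group Γ(V) is homogeneous with respect to the ℤ/2ℤ-grading of C(V): either x' = x (x lies in the even part C⁰(V)) or x' = −x (x lies in the odd part C¹(V)). Hence Γ(V) is the disjoint union of Γ⁰(V) = Γ(V) ∩ C⁰(V) and Γ¹(V) = Γ(V) ∩ C¹(V). -/

import Mathlib

/-! Put `z = (u⁻¹)' u` for `u ∈ Γ(V)`. Conjugating `u v (u')⁻¹ = u' v u⁻¹` (the image of the
Clifford group condition under `'`) by `u` gives `v z = z' v` for all `v ∈ V`. Since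
`v y = y' v + polar(v, ·) ⌋ y` in any Clifford algebra, every contraction of `z` vanishes.
Splitting off the vectors of an orthogonal basis one at a time, each anisotropic by
nondegeneracy, writes `z = a + e c` with `e ⌋ a = e ⌋ c = 0`, so `0 = e ⌋ z = polar(e, e) c`
forces `c = 0`; hence `z` is a scalar `r`. Then `u = r u'`, so `u' = r u`, `r² = 1` and
`u' = ± u`, and the two cases exclude each other because `2 ≠ 0`. -/

open CliffordAlgebra

namespace CliffordAlgebra

open QuadraticMap

section CommRing

variable {R M : Type*} [CommRing R] [AddCommGroup M] [Module R M] {Q : QuadraticForm R M}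

theorem contractLeft_mul (d : Module.Dual R M) (x y : CliffordAlgebra Q) :
    contractLeft d (x * y) = contractLeft d x * y + involute x * contractLeft d y := by
  induction x using CliffordAlgebra.induction generalizing y with
  | algebraMap r =>
    rw [contractLeft_algebraMap_mul, contractLeft_algebraMap, zero_mul, zero_add,
      AlgHom.commutes]
  | ι v =>
    rw [contractLeft_ι_mul, contractLeft_ι, involute_ι, Algebra.smul_def, sub_eq_add_neg, neg_mul]
  | mul a b ha hb =>
    rw [mul_assoc, ha, hb, ha, map_mul]
    noncomm_ring
  | add a b ha hb =>
    simp only [add_mul, map_add, ha, hb]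
    abel

theorem ι_mul_eq_involute_mul_add_contractLeft (v : M) (x : CliffordAlgebra Q) :
    ι Q v * x = involute x * ι Q v + contractLeft (polarBilin Q v) x := by
  induction x using CliffordAlgebra.induction with
  | algebraMap r =>
    rw [contractLeft_algebraMap, add_zero, AlgHom.commutes, Algebra.commutes]
  | ι w =>
    rw [involute_ι, contractLeft_ι, polarBilin_apply_apply, ← ι_mul_ι_add_swap]
    noncomm_ring
  | mul a b ha hb =>
    rw [← mul_assoc, ha, add_mul, mul_assoc, hb, contractLeft_mul, map_mul]
    noncomm_ring
  | add a b ha hb =>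
    rw [mul_add, ha, hb, map_add, map_add, add_mul]
    abel

variable {s : Set M} {x : CliffordAlgebra Q}

theorem involute_mem_adjoin_image_ι (hx : x ∈ Algebra.adjoin R (ι Q '' s)) :
    involute x ∈ Algebra.adjoin R (ι Q '' s) := by
  induction hx using Algebra.adjoin_induction with
  | mem y hy =>
    obtain ⟨w, hw, rfl⟩ := hy
    rw [involute_ι]
    exact neg_mem (Algebra.subset_adjoin ⟨w, hw, rfl⟩)
  | algebraMap r => rw [AlgHom.commutes]; exact algebraMap_mem _ r
  | add x y _ _ ihx ihy => rw [map_add]; exact add_mem ihx ihy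
  | mul x y _ _ ihx ihy => rw [map_mul]; exact mul_mem ihx ihy

theorem contractLeft_eq_zero_of_mem_adjoin {d : Module.Dual R M} (hd : ∀ w ∈ s, d w = 0)
    (hx : x ∈ Algebra.adjoin R (ι Q '' s)) : contractLeft d x = 0 := by
  induction hx using Algebra.adjoin_induction with
  | mem y hy =>
    obtain ⟨w, hw, rfl⟩ := hy
    rw [contractLeft_ι, hd w hw, map_zero]
  | algebraMap r => exact contractLeft_algebraMap _ _ _
  | add x y _ _ ihx ihy => rw [map_add, ihx, ihy, add_zero]
  | mul x y _ _ ihx ihy => rw [contractLeft_mul, ihx, ihy, zero_mul, mul_zero, add_zero]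

theorem ι_mul_eq_involute_mul_of_mem_adjoin {v : M} (hv : ∀ w ∈ s, polar Q v w = 0)
    (hx : x ∈ Algebra.adjoin R (ι Q '' s)) : ι Q v * x = involute x * ι Q v := by
  rw [ι_mul_eq_involute_mul_add_contractLeft, contractLeft_eq_zero_of_mem_adjoin hv hx, add_zero]

theorem exists_eq_add_ι_mul_of_mem_adjoin_insert {v : M} (hv : ∀ w ∈ s, polar Q v w = 0)
    (hx : x ∈ Algebra.adjoin R (ι Q '' insert v s)) :
    ∃ a ∈ Algebra.adjoin R (ι Q '' s), ∃ c ∈ Algebra.adjoin R (ι Q '' s),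
      x = a + ι Q v * c := by
  have mul_ι : ∀ t ∈ Algebra.adjoin R (ι Q '' s), t * ι Q v = ι Q v * involute t := fun t ht => by
    rw [ι_mul_eq_involute_mul_of_mem_adjoin hv (involute_mem_adjoin_image_ι ht),
      involute_involute]
  induction hx using Algebra.adjoin_induction with
  | mem y hy =>
    obtain ⟨w, hw | hw, rfl⟩ := hy
    · exact ⟨0, zero_mem _, 1, one_mem _, by rw [hw, mul_one, zero_add]⟩
    · exact ⟨ι Q w, Algebra.subset_adjoin ⟨w, hw, rfl⟩, 0, zero_mem _, by rw [mul_zero, add_zero]⟩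
  | algebraMap r =>
    exact ⟨algebraMap R _ r, algebraMap_mem _ r, 0, zero_mem _, by rw [mul_zero, add_zero]⟩
  | add x y _ _ ihx ihy =>
    obtain ⟨a₁, ha₁, c₁, hc₁, rfl⟩ := ihx
    obtain ⟨a₂, ha₂, c₂, hc₂, rfl⟩ := ihy
    exact ⟨a₁ + a₂, add_mem ha₁ ha₂, c₁ + c₂, add_mem hc₁ hc₂, by rw [mul_add]; abel⟩
  | mul x y _ _ ihx ihy =>
    obtain ⟨a₁, ha₁, c₁, hc₁, rfl⟩ := ihx
    obtain ⟨a₂, ha₂, c₂, hc₂, rfl⟩ := ihy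
    refine ⟨a₁ * a₂ + Q v • (involute c₁ * c₂),
      add_mem (mul_mem ha₁ ha₂)
        (Subalgebra.smul_mem _ (mul_mem (involute_mem_adjoin_image_ι hc₁) hc₂) _),
      involute a₁ * c₂ + c₁ * a₂,
      add_mem (mul_mem (involute_mem_adjoin_image_ι ha₁) hc₂) (mul_mem hc₁ ha₂), ?_⟩
    calc (a₁ + ι Q v * c₁) * (a₂ + ι Q v * c₂)
        = a₁ * a₂ + (a₁ * ι Q v) * c₂ + ι Q v * (c₁ * a₂) + ι Q v * (c₁ * ι Q v) * c₂ := by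
          noncomm_ring
      _ = a₁ * a₂ + ι Q v * involute a₁ * c₂ + ι Q v * (c₁ * a₂)
            + ι Q v * ι Q v * involute c₁ * c₂ := by
          rw [mul_ι a₁ ha₁, mul_ι c₁ hc₁]; noncomm_ring
      _ = _ := by
          rw [ι_sq_scalar, Algebra.smul_def]; noncomm_ring

theorem adjoin_image_ι_eq_top_of_span_eq_top (hs : Submodule.span R s = ⊤) :
    Algebra.adjoin R (ι Q '' s) = ⊤ := by
  rw [eq_top_iff, ← adjoin_range_ι]
  refine Algebra.adjoin_le ?_
  rintro _ ⟨v, rfl⟩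
  apply Algebra.span_le_adjoin
  rw [← Submodule.map_span, hs]
  exact Submodule.mem_map_of_mem trivial

end CommRing

section Field

variable {F V : Type*} [Field F] [AddCommGroup V] [Module F V] {Q : QuadraticForm F V}

theorem mem_bot_of_contractLeft_eq_zero_of_mem_adjoin (s : Finset V)
    (hs : (s : Set V).Pairwise fun v w => polar Q v w = 0) (hs₀ : ∀ v ∈ s, polar Q v v ≠ 0)
    {x : CliffordAlgebra Q} (hx : x ∈ Algebra.adjoin F (ι Q '' s))
    (hxc : ∀ v ∈ s, contractLeft (polarBilin Q v) x = 0) : x ∈ (⊥ : Subalgebra F _) := by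
  classical
  induction s using Finset.induction_on generalizing x with
  | empty => simpa using hx
  | insert v t hvt ih =>
    rw [Finset.coe_insert, Set.pairwise_insert] at hs
    have hv : ∀ w ∈ (t : Set V), polar Q v w = 0 := fun w hw =>
      (hs.2 w hw (ne_of_mem_of_not_mem hw hvt).symm).1
    rw [Finset.coe_insert] at hx
    obtain ⟨a, ha, c, hc, rfl⟩ := exists_eq_add_ι_mul_of_mem_adjoin_insert hv hx
    have hvc := hxc v (Finset.mem_insert_self v t)
    rw [map_add, contractLeft_eq_zero_of_mem_adjoin hv ha, zero_add, contractLeft_ι_mul,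
      contractLeft_eq_zero_of_mem_adjoin hv hc, mul_zero, sub_zero, polarBilin_apply_apply,
      smul_eq_zero] at hvc
    obtain rfl : c = 0 := hvc.resolve_left (hs₀ v (Finset.mem_insert_self v t))
    rw [mul_zero, add_zero] at hxc ⊢
    exact ih hs.1 (fun w hw => hs₀ w (Finset.mem_insert_of_mem hw)) ha
      (fun w hw => hxc w (Finset.mem_insert_of_mem hw))

theorem mem_bot_of_forall_ι_mul_eq_involute_mul [Invertible (2 : F)] [FiniteDimensional F V]
    (hQ : (polarBilin Q).SeparatingLeft) {x : CliffordAlgebra Q}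
    (hx : ∀ v, ι Q v * x = involute x * ι Q v) : x ∈ (⊥ : Subalgebra F _) := by
  classical
  obtain ⟨b, hb⟩ := LinearMap.BilinForm.exists_orthogonal_basis (B := polarBilin Q)
    (LinearMap.isSymm_def.mpr (polar_comm Q))
  have hrange : ((Finset.univ.image b : Finset V) : Set V) = Set.range b := by
    rw [Finset.coe_image, Finset.coe_univ, Set.image_univ]
  refine mem_bot_of_contractLeft_eq_zero_of_mem_adjoin (Finset.univ.image b) ?_ ?_ ?_ ?_
  · rw [hrange]
    rintro _ ⟨i, rfl⟩ _ ⟨j, rfl⟩ hij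
    exact hb fun h => hij (congrArg b h)
  · intro v hv
    obtain ⟨i, -, rfl⟩ := Finset.mem_image.mp hv
    exact hb.not_isOrtho_basis_self_of_separatingLeft hQ i
  · rw [hrange, adjoin_image_ι_eq_top_of_span_eq_top b.span_eq]
    trivial
  · intro v _
    simpa using (ι_mul_eq_involute_mul_add_contractLeft v x).symm.trans (hx v)

theorem involute_eq_or_eq_neg_of_forall_conj_ι_eq_ι [Invertible (2 : F)]
    [FiniteDimensional F V] (hQ : (polarBilin Q).SeparatingLeft) (u : (CliffordAlgebra Q)ˣ)
    (hu : ∀ v, ∃ w,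
      (u : CliffordAlgebra Q) * ι Q v * involute (↑u⁻¹ : CliffordAlgebra Q) = ι Q w) :
    involute (u : CliffordAlgebra Q) = u ∨ involute (u : CliffordAlgebra Q) = -u := by
  set U : CliffordAlgebra Q := ↑u
  set U' : CliffordAlgebra Q := ↑u⁻¹
  have hUU' : U * U' = 1 := u.mul_inv
  have hU'U : U' * U = 1 := u.inv_mul
  have hconj : ∀ v, U * ι Q v * involute U' = involute U * ι Q v * U' := fun v => by
    obtain ⟨w, hw⟩ := hu v
    have hw' := congrArg involute hw
    simp only [map_mul, involute_ι, involute_involute, mul_neg, neg_mul, neg_inj] at hw'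
    rw [hw, hw']
  have htwisted : ∀ v, ι Q v * (involute U' * U) = involute (involute U' * U) * ι Q v := by
    intro v
    calc ι Q v * (involute U' * U) = U' * U * ι Q v * (involute U' * U) := by
          rw [hU'U, one_mul]
      _ = U' * (U * ι Q v * involute U') * U := by noncomm_ring
      _ = U' * (involute U * ι Q v * U') * U := by rw [hconj]
      _ = involute (involute U' * U) * ι Q v * (U' * U) := by
          rw [map_mul, involute_involute]; noncomm_ring
      _ = involute (involute U' * U) * ι Q v := by rw [hU'U, mul_one]
  obtain ⟨r, hr⟩ := Algebra.mem_bot.mp (mem_bot_of_forall_ι_mul_eq_involute_mul hQ htwisted)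
  have hU : U = r • involute U := by
    rw [Algebra.smul_def, Algebra.commutes, hr, ← mul_assoc, ← map_mul, hUU', map_one, one_mul]
  have hU' : involute U = r • U := by
    conv_lhs => rw [hU, map_smul, involute_involute]
  have hr : r * r = 1 := by
    have h : (r * r - 1) • U = 0 := by
      rw [sub_smul, mul_smul, ← hU', ← hU, one_smul, sub_self]
    exact sub_eq_zero.mp ((smul_eq_zero.mp h).resolve_right u.ne_zero)
  rcases mul_self_eq_one_iff.mp hr with rfl | rfl
  · exact Or.inl (hU'.trans (one_smul F _))
  · exact Or.inr (hU'.trans (neg_one_smul F _))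

end Field

end CliffordAlgebra

theorem stmt_4 {F : Type*} [Field F] (hchar : (2 : F) ≠ 0)
    {V : Type*} [AddCommGroup V] [Module F V] [FiniteDimensional F V]
    (S : LinearMap.BilinForm F V) (hS : ∀ x y, S x y = S y x)
    (hnd : ∀ x : V, (∀ y : V, S x y = 0) → x = 0)
    (Q : QuadraticForm F V) (hQ : ∀ v, Q v = -(S v v))
    (u : (CliffordAlgebra Q)ˣ)
    (hu : ∀ v : V, ∃ w : V, (u : CliffordAlgebra Q) * ι Q v *
      involute (↑u⁻¹ : CliffordAlgebra Q) = ι Q w) :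
    (involute (u : CliffordAlgebra Q) = (u : CliffordAlgebra Q) ∧
      ¬ involute (u : CliffordAlgebra Q) = -(u : CliffordAlgebra Q)) ∨
    (involute (u : CliffordAlgebra Q) = -(u : CliffordAlgebra Q) ∧
      ¬ involute (u : CliffordAlgebra Q) = (u : CliffordAlgebra Q)) := by
  let : Invertible (2 : F) := invertibleOfNonzero hchar
  have hpolar : ∀ v w, QuadraticMap.polar Q v w = -2 * S v w := fun v w => by
    simp only [QuadraticMap.polar, hQ, map_add, LinearMap.add_apply, hS w v]
    ring
  have hsep : (QuadraticMap.polarBilin Q).SeparatingLeft := fun v hv => hnd v fun w =>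
    (mul_eq_zero.mp ((hpolar v w).symm.trans (hv w))).resolve_left (neg_ne_zero.mpr hchar)
  have hne : (u : CliffordAlgebra Q) ≠ -u := fun h => u.ne_zero <| by
    have h2 : (2 : F) • (u : CliffordAlgebra Q) = 0 := by
      rw [two_smul]; nth_rewrite 1 [h]; exact neg_add_cancel _
    exact (smul_eq_zero.mp h2).resolve_left hchar
  rcases involute_eq_or_eq_neg_of_forall_conj_ι_eq_ι hsep u hu with h | h
  · exact Or.inl ⟨h, fun h' => hne (h.symm.trans h')⟩
  · exact Or.inr ⟨h, fun h' => hne (h'.symm.trans h)⟩
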